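/- arXiv:2104.07247 — 2 statements merged into one kernel-verified Lean document; each statement's English description precedes it below -/
import Mathlib

section
/- Let N ≥ 1 and let ψ, φ be unit vectors in ℂ^N. Let V be the reflection about ψ, let P_φ be the orthogonal projection onto the span of φ, and set a = |⟪ψ, φ⟫|. Then the self-adjoint operator V P_φ V - P_φ has rank at most 2, and the sum of the absolute values of its eigenvalues (counted with multiplicity) equals 4·a·√(1 - a²). Equivalently, the trace distance between the pure states V φ and φ equals 2·a·√(1 - a²). -/
/-!
Since `V` is self-adjoint, `V P_φ V = P_{Vφ}`, so both operators of the statement are the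
difference `P_u - P_φ` of two rank-one projections, with `u = Vφ`. Such a difference has rank at
most two and trace zero, so its nonzero eigenvalues are `±λ`, and
`2 λ² = tr (P_u - P_φ)² = 2 - 2 |⟪u, φ⟫|²`. For the reflection `⟪Vφ, φ⟫ = 1 - 2 a²`, whence
`λ = √(1 - (1 - 2 a²)²) = 2 a √(1 - a²)`.
-/

open scoped InnerProductSpace
open Matrix

namespace Matrix

variable {m n : Type*}

theorem isHermitian_vecMulVec_star_self {α : Type*} [CommSemiring α] [StarRing α] (v : n → α) :
    (vecMulVec v (star v)).IsHermitian := by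
  rw [IsHermitian, conjTranspose_vecMulVec, star_star]

variable [Fintype n]

theorem mul_vecMulVec_star_mul_conjTranspose {α : Type*} [CommSemiring α] [StarRing α]
    (M : Matrix m n α) (v : n → α) :
    M * vecMulVec v (star v) * Mᴴ = vecMulVec (M *ᵥ v) (star (M *ᵥ v)) := by
  rw [mul_vecMulVec, vecMulVec_mul, star_mulVec]

theorem rank_sub_le {K : Type*} [Field K] (A B : Matrix m n K) :
    (A - B).rank ≤ A.rank + B.rank := by
  have hrange : LinearMap.range (A - B).mulVecLin ≤
      LinearMap.range A.mulVecLin ⊔ LinearMap.range B.mulVecLin := by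
    rintro _ ⟨x, rfl⟩
    rw [mulVecLin_apply, sub_mulVec]
    exact Submodule.sub_mem_sup (LinearMap.mem_range_self _ x) (LinearMap.mem_range_self _ x)
  exact (Submodule.finrank_mono hrange).trans (Submodule.finrank_add_le_finrank_add_finrank _ _)

theorem rank_vecMulVec_sub_vecMulVec_le {K : Type*} [Field K] (u w : m → K) (v x : n → K) :
    (vecMulVec u v - vecMulVec w x).rank ≤ 2 :=
  (rank_sub_le _ _).trans (add_le_add (rank_vecMulVec_le u v) (rank_vecMulVec_le w x))

theorem IsHermitian.trace_mul_self {𝕜 : Type*} [RCLike 𝕜] [DecidableEq n] {A : Matrix n n 𝕜}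
    (hA : A.IsHermitian) : (A * A).trace = ∑ i, (hA.eigenvalues i : 𝕜) ^ 2 := by
  conv_lhs => rw [hA.spectral_theorem, ← map_mul, Unitary.conjStarAlgAut_apply, trace_mul_cycle,
    Unitary.coe_star_mul_self, one_mul, diagonal_mul_diagonal, trace_diagonal]
  simp [sq]

theorem one_sub_two_smul_vecMulVec_star_mulVec {𝕜 : Type*} [RCLike 𝕜] [DecidableEq n]
    (ψ φ : EuclideanSpace 𝕜 n) :
    (1 - (2 : 𝕜) • vecMulVec ψ (star ψ)) *ᵥ φ = (φ - (2 * ⟪ψ, φ⟫_𝕜) • ψ : EuclideanSpace 𝕜 n) := by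
  rw [sub_mulVec, one_mulVec, smul_mulVec, vecMulVec_mulVec, dotProduct_comm,
    ← EuclideanSpace.inner_eq_star_dotProduct]
  simp [smul_smul]

end Matrix

/-- Both sides only see the at most two nonzero values, which sum to zero and so are `±x`. -/
theorem sq_sum_abs_eq_two_mul_sum_sq {ι : Type*} [Fintype ι] {f : ι → ℝ}
    (hcard : Fintype.card {i // f i ≠ 0} ≤ 2) (hsum : ∑ i, f i = 0) :
    (∑ i, |f i|) ^ 2 = 2 * ∑ i, f i ^ 2 := by
  classical
  set s := Finset.univ.filter (f · ≠ 0)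
  have hs : s.card ≤ 2 := by rwa [Fintype.card_subtype] at hcard
  have sum_support : ∀ g : ℝ → ℝ, g 0 = 0 → ∑ i ∈ s, g (f i) = ∑ i, g (f i) := fun g hg =>
    Finset.sum_filter_of_ne fun i _ hi h => hi (h ▸ hg)
  rw [← sum_support abs abs_zero, ← sum_support (· ^ 2) (by simp)]
  replace hsum : ∑ i ∈ s, f i = 0 := (sum_support id rfl).trans hsum
  interval_cases h : s.card
  · simp [Finset.card_eq_zero.mp h]
  · obtain ⟨x, hx⟩ := Finset.card_eq_one.mp h
    have hxs : x ∈ s := hx ▸ Finset.mem_singleton_self x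
    rw [hx, Finset.sum_singleton] at hsum
    simp [s, hsum] at hxs
  · obtain ⟨x, y, hxy, hxys⟩ := Finset.card_eq_two.mp h
    simp only [hxys, Finset.sum_pair hxy] at hsum ⊢
    rw [eq_neg_of_add_eq_zero_right hsum, abs_neg, neg_sq, ← sq_abs (f x)]
    ring

theorem Matrix.IsHermitian.sq_sum_abs_eigenvalues_of_rank_le_two {n 𝕜 : Type*} [Fintype n]
    [DecidableEq n] [RCLike 𝕜] {A : Matrix n n 𝕜} (hA : A.IsHermitian) (hrank : A.rank ≤ 2)
    (htr : A.trace = 0) :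
    (∑ i, |hA.eigenvalues i|) ^ 2 = 2 * RCLike.re (A * A).trace := by
  have hsum : ∑ i, hA.eigenvalues i = 0 := by
    rw [hA.trace_eq_sum_eigenvalues] at htr
    exact_mod_cast htr
  rw [sq_sum_abs_eq_two_mul_sum_sq (hA.rank_eq_card_non_zero_eigs ▸ hrank) hsum,
    hA.trace_mul_self]
  simp only [map_sum, ← RCLike.ofReal_pow, RCLike.ofReal_re]

section PureStates

variable {n 𝕜 : Type*} [Fintype n] [RCLike 𝕜]

theorem trace_vecMulVec_star_mul_vecMulVec_star (u v : EuclideanSpace 𝕜 n) :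
    (vecMulVec u (star u) * vecMulVec v (star v)).trace = ((‖⟪u, v⟫_𝕜‖ ^ 2 : ℝ) : 𝕜) := by
  rw [vecMulVec_mul_vecMulVec, trace_vecMulVec, dotProduct_smul, smul_eq_mul,
    dotProduct_comm (star _), ← EuclideanSpace.inner_eq_star_dotProduct,
    ← EuclideanSpace.inner_eq_star_dotProduct, ← inner_conj_symm v u, RCLike.mul_conj]
  norm_cast

variable {u v : EuclideanSpace 𝕜 n}

theorem trace_vecMulVec_star_sub_vecMulVec_star (hu : ‖u‖ = 1) (hv : ‖v‖ = 1) :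
    (vecMulVec u (star u) - vecMulVec v (star v)).trace = 0 := by
  rw [trace_sub, trace_vecMulVec, trace_vecMulVec, ← EuclideanSpace.inner_eq_star_dotProduct,
    ← EuclideanSpace.inner_eq_star_dotProduct, inner_self_eq_one_of_norm_eq_one hu,
    inner_self_eq_one_of_norm_eq_one hv, sub_self]

theorem trace_sq_vecMulVec_star_sub_vecMulVec_star (hu : ‖u‖ = 1) (hv : ‖v‖ = 1) :
    ((vecMulVec u (star u) - vecMulVec v (star v)) *
      (vecMulVec u (star u) - vecMulVec v (star v))).trace =
      ((2 - 2 * ‖⟪u, v⟫_𝕜‖ ^ 2 : ℝ) : 𝕜) := by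
  simp only [sub_mul, mul_sub, trace_sub, trace_vecMulVec_star_mul_vecMulVec_star,
    norm_inner_symm v u, inner_self_eq_one_of_norm_eq_one hu,
    inner_self_eq_one_of_norm_eq_one hv, norm_one]
  push_cast
  ring

theorem sum_abs_eigenvalues_vecMulVec_star_sub_vecMulVec_star [DecidableEq n]
    (hu : ‖u‖ = 1) (hv : ‖v‖ = 1)
    (h : (vecMulVec u (star u) - vecMulVec v (star v)).IsHermitian) :
    ∑ i, |h.eigenvalues i| = 2 * √(1 - ‖⟪u, v⟫_𝕜‖ ^ 2) := by
  have hsq := h.sq_sum_abs_eigenvalues_of_rank_le_two (rank_vecMulVec_sub_vecMulVec_le _ _ _ _)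
    (trace_vecMulVec_star_sub_vecMulVec_star hu hv)
  rw [trace_sq_vecMulVec_star_sub_vecMulVec_star hu hv, RCLike.ofReal_re] at hsq
  rw [← Real.sqrt_sq (Finset.sum_nonneg fun i _ => abs_nonneg _), hsq,
    show 2 * (2 - 2 * ‖⟪u, v⟫_𝕜‖ ^ 2) = 2 ^ 2 * (1 - ‖⟪u, v⟫_𝕜‖ ^ 2) by ring,
    Real.sqrt_mul (by positivity), Real.sqrt_sq zero_le_two]

end PureStates

section Reflection

variable {𝕜 E : Type*} [RCLike 𝕜] [NormedAddCommGroup E] [InnerProductSpace 𝕜 E]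

theorem reflection_orthogonalComplement_singleton_apply {ψ : E} (hψ : ‖ψ‖ = 1) (φ : E) :
    (𝕜 ∙ ψ)ᗮ.reflection φ = φ - (2 * ⟪ψ, φ⟫_𝕜) • ψ := by
  rw [Submodule.reflection_orthogonal_apply, Submodule.reflection_singleton_apply, hψ]
  simp only [RCLike.ofReal_one, one_pow, div_one, neg_sub]
  module

theorem inner_sub_two_inner_smul_self_left (ψ φ : E) :
    ⟪φ - (2 * ⟪ψ, φ⟫_𝕜) • ψ, φ⟫_𝕜 = ((‖φ‖ ^ 2 - 2 * ‖⟪ψ, φ⟫_𝕜‖ ^ 2 : ℝ) : 𝕜) := by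
  rw [inner_sub_left, inner_smul_left, inner_self_eq_norm_sq_to_K, map_mul, map_ofNat,
    mul_assoc, RCLike.conj_mul]
  push_cast
  ring

end Reflection

theorem stmt_1_general (N : ℕ)
    (ψ φ : EuclideanSpace ℂ (Fin N)) (hψ : ‖ψ‖ = 1) (hφ : ‖φ‖ = 1)
    (V Pφ A B : Matrix (Fin N) (Fin N) ℂ)
    (hV : V = 1 - (2 : ℂ) • Matrix.vecMulVec ψ (star ψ))
    (hPφ : Pφ = Matrix.vecMulVec φ (star φ))
    (hA : A = V * Pφ * V - Pφ)
    (hB : B = Matrix.vecMulVec (V *ᵥ φ) (star (V *ᵥ φ)) - Matrix.vecMulVec φ (star φ))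
    (a : ℝ) (ha : a = ‖⟪ψ, φ⟫_ℂ‖) :
    A.rank ≤ 2 ∧
    ∃ hAh : A.IsHermitian, (∑ i, |hAh.eigenvalues i|) = 4 * a * Real.sqrt (1 - a ^ 2) ∧
    ∃ hBh : B.IsHermitian,
      (1 / 2) * (∑ i, |hBh.eigenvalues i|) = 2 * a * Real.sqrt (1 - a ^ 2) := by
  set u := (ℂ ∙ ψ)ᗮ.reflection φ
  have hu_eq : u = φ - (2 * ⟪ψ, φ⟫_ℂ) • ψ := reflection_orthogonalComplement_singleton_apply hψ φ
  have hVφ : V *ᵥ φ = u := by rw [hV, one_sub_two_smul_vecMulVec_star_mulVec, hu_eq]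
  have hVh : Vᴴ = V := by
    rw [hV]
    exact isHermitian_one.sub ((isHermitian_vecMulVec_star_self _).smul (.ofNat 2))
  have hu : ‖u‖ = 1 := (LinearIsometryEquiv.norm_map _ φ).trans hφ
  have hinner : ‖⟪u, φ⟫_ℂ‖ = |1 - 2 * a ^ 2| := by
    rw [hu_eq, inner_sub_two_inner_smul_self_left, hφ, ← ha, RCLike.norm_ofReal, one_pow]
  obtain rfl : B = vecMulVec u (star u) - vecMulVec φ (star φ) := by rw [hB, hVφ]
  obtain rfl : A = vecMulVec u (star u) - vecMulVec φ (star φ) := by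
    rw [hA, hPφ, ← hVφ, ← mul_vecMulVec_star_mul_conjTranspose, hVh]
  have hM := (isHermitian_vecMulVec_star_self u).sub (isHermitian_vecMulVec_star_self φ)
  have hsum : ∑ i, |hM.eigenvalues i| = 4 * a * √(1 - a ^ 2) := by
    have ha0 : 0 ≤ 2 * a := by rw [ha]; positivity
    rw [sum_abs_eigenvalues_vecMulVec_star_sub_vecMulVec_star hu hφ, hinner, sq_abs,
      show 1 - (1 - 2 * a ^ 2) ^ 2 = (2 * a) ^ 2 * (1 - a ^ 2) by ring,
      Real.sqrt_mul (sq_nonneg _), Real.sqrt_sq ha0]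
    ring
  exact ⟨rank_vecMulVec_sub_vecMulVec_le _ _ _ _, hM, hsum, hM, by rw [hsum]; ring⟩

/-- for the reflection `V` about a unit vector `ψ` and a unit vector `φ`,
with `a = |⟪ψ,φ⟫|`, the self-adjoint operator `V P_φ V - P_φ` has rank at most `2` and the
absolute values of its eigenvalues sum to `4·a·√(1-a²)`; equivalently the trace distance
between the pure states `Vφ` and `φ` equals `2·a·√(1-a²)`. -/
theorem stmt_1 (N : ℕ) (hN : 1 ≤ N)
    (ψ φ : EuclideanSpace ℂ (Fin N)) (hψ : ‖ψ‖ = 1) (hφ : ‖φ‖ = 1)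
    (V Pφ A B : Matrix (Fin N) (Fin N) ℂ)
    (hV : V = 1 - (2 : ℂ) • Matrix.vecMulVec ψ (star ψ))
    (hPφ : Pφ = Matrix.vecMulVec φ (star φ))
    (hA : A = V * Pφ * V - Pφ)
    (hB : B = Matrix.vecMulVec (V *ᵥ φ) (star (V *ᵥ φ)) - Matrix.vecMulVec φ (star φ))
    (a : ℝ) (ha : a = ‖⟪ψ, φ⟫_ℂ‖) :
    A.rank ≤ 2 ∧
    ∃ hAh : A.IsHermitian, (∑ i, |hAh.eigenvalues i|) = 4 * a * Real.sqrt (1 - a ^ 2) ∧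
    ∃ hBh : B.IsHermitian,
      (1 / 2) * (∑ i, |hBh.eigenvalues i|) = 2 * a * Real.sqrt (1 - a ^ 2) :=
  stmt_1_general N ψ φ hψ hφ V Pφ A B hV hPφ hA hB a ha
end

section
/- Let n and p be natural numbers and let A : ({0,1}^n → Bool) → ({0,1}^p) be any function (assigning a p-bit advice string to each assignment of membership, i.e. to each Boolean-valued language restricted to strings of length n). Then there exists an advice string z ∈ {0,1}^p such that the set D = { x ∈ {0,1}^n : there exist f, g ∈ A⁻¹(z) with f(x) ≠ g(x) } of inputs not determined by z satisfies |D| ≥ 2^n - p. -/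
/-!
The advice string `z` cuts the `2 ^ 2 ^ n` languages into `2 ^ p` fibres, so by pigeonhole some
fibre has at least `2 ^ (2 ^ n - p)` members. Members of one fibre agree outside the set `D` of
inputs on which they disagree, so the fibre embeds into `D → Bool` and has at most `2 ^ |D|`
members. Comparing exponents gives `|D| ≥ 2 ^ n - p`.
-/

open Function Set

section Disagreement

variable {α β : Type*}

def disagreementSet (S : Set (α → β)) : Set α :=
  {x | ∃ f g, f ∈ S ∧ g ∈ S ∧ f x ≠ g x}

theorem eqOn_compl_disagreementSet {S : Set (α → β)} {f g : α → β} (hf : f ∈ S) (hg : g ∈ S) :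
    EqOn f g (disagreementSet S)ᶜ :=
  fun _ hx => not_not.mp fun hne => hx ⟨f, g, hf, hg, hne⟩

theorem ncard_le_pow_ncard_disagreementSet [Finite α] [Finite β] (S : Set (α → β)) :
    S.ncard ≤ Nat.card β ^ (disagreementSet S).ncard := by
  have hrestrict : Injective fun (f : S) (x : disagreementSet S) => f.1 x := by
    rintro ⟨f, hf⟩ ⟨g, hg⟩ hfg
    refine Subtype.ext (funext fun x => ?_)
    by_cases hx : x ∈ disagreementSet S
    · exact congrFun hfg ⟨x, hx⟩
    · exact eqOn_compl_disagreementSet hf hg hx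
  simpa only [Nat.card_coe_set_eq, Nat.card_fun] using Nat.card_le_card_of_injective _ hrestrict

end Disagreement

theorem exists_card_le_mul_ncard_preimage {X Y : Type*} [Finite X] [Finite Y] [Nonempty Y]
    (f : X → Y) : ∃ y, Nat.card X ≤ Nat.card Y * (f ⁻¹' {y}).ncard := by
  classical
  have := Fintype.ofFinite X
  have := Fintype.ofFinite Y
  have hY : (0 : ℚ) < Fintype.card Y := by exact_mod_cast Fintype.card_pos
  -- pigeonhole with the average fibre size `|X| / |Y|` as threshold
  obtain ⟨y, hy⟩ := Fintype.exists_le_card_fiber_of_nsmul_le_card f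
    (b := (Fintype.card X : ℚ) / Fintype.card Y) (by rw [nsmul_eq_mul, mul_div_cancel₀ _ hY.ne'])
  refine ⟨y, ?_⟩
  rw [ncard_eq_toFinset_card', Nat.card_eq_fintype_card, Nat.card_eq_fintype_card]
  rw [div_le_iff₀' hY] at hy
  simpa [toFinset_ofPred] using (by exact_mod_cast hy : Fintype.card X ≤ _)

theorem exists_two_pow_card_le_mul_two_pow_ncard_disagreementSet_preimage {α γ : Type*}
    [Finite α] [Finite γ] [Nonempty γ] (A : (α → Bool) → γ) :
    ∃ z, 2 ^ Nat.card α ≤ Nat.card γ * 2 ^ (disagreementSet (A ⁻¹' {z})).ncard := by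
  obtain ⟨z, hz⟩ := exists_card_le_mul_ncard_preimage A
  refine ⟨z, ?_⟩
  calc 2 ^ Nat.card α = Nat.card (α → Bool) := by simp [Nat.card_fun]
    _ ≤ _ := hz
    _ ≤ _ := by
      gcongr
      simpa using ncard_le_pow_ncard_disagreementSet (A ⁻¹' {z})

/-- for any assignment `A` of a `p`-bit advice string to each Boolean language
on `n`-bit inputs, some advice string `z` fails to determine membership of at least
`2^n - p` inputs. -/
theorem stmt_11 (n p : ℕ) (A : ((Fin n → Bool) → Bool) → (Fin p → Bool)) :
    ∃ z : Fin p → Bool,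
      (2 ^ n : ℤ) - p ≤
        ({x : Fin n → Bool | ∃ f, ∃ g, A f = z ∧ A g = z ∧ f x ≠ g x} : Set (Fin n → Bool)).ncard := by
  obtain ⟨z, hz⟩ := exists_two_pow_card_le_mul_two_pow_ncard_disagreementSet_preimage A
  refine ⟨z, ?_⟩
  have hexp : 2 ^ n ≤ p + (disagreementSet (A ⁻¹' {z})).ncard := by
    simp only [Nat.card_eq_fintype_card, Fintype.card_fun, Fintype.card_fin, Fintype.card_bool,
      ← pow_add] at hz
    exact (Nat.pow_le_pow_iff_right one_lt_two).mp hz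
  change _ ≤ ((disagreementSet (A ⁻¹' {z})).ncard : ℤ)
  have := (Nat.cast_le (α := ℤ)).mpr hexp
  push_cast at this
  linarith
end
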